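/- Let S ⊂ ℝ^m be a finite set whose convex hull P has nonempty interior and let c : S → ℝ_{>0}. Then each function m_{S,c,α} (α ∈ S), initially defined on P°, extends to a continuous function on all of P; moreover the extensions satisfy Σ_{α∈S} m_{S,c,α}(x) = 1 and Σ_{α∈S} m_{S,c,α}(x)·α = x for every x ∈ P. -/

import Mathlib

open MeasureTheory Filter Set
open scoped RealInnerProductSpace ENNReal Topology

noncomputable section

/-- `χ_{S,c}(τ) = Σ_{α∈S} c(α) e^{⟨α,τ⟩}`. -/
def chiSc {m : ℕ} (S : Finset (EuclideanSpace ℝ (Fin m)))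
    (c : EuclideanSpace ℝ (Fin m) → ℝ) (τ : EuclideanSpace ℝ (Fin m)) : ℝ :=
  ∑ α ∈ S, c α * Real.exp ⟪α, τ⟫

/-- The moment map `μ_{S,c}(τ) = Σ_{α∈S} (c(α) e^{⟨α,τ⟩} / χ_{S,c}(τ)) · α`. -/
def muSc {m : ℕ} (S : Finset (EuclideanSpace ℝ (Fin m)))
    (c : EuclideanSpace ℝ (Fin m) → ℝ) (τ : EuclideanSpace ℝ (Fin m)) :
    EuclideanSpace ℝ (Fin m) :=
  (chiSc S c τ)⁻¹ • ∑ α ∈ S, (c α * Real.exp ⟪α, τ⟫) • α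

/-- `m_{S,c,α}(x) = c(α) e^{⟨α,τ_{S,c}(x)⟩} / χ_{S,c}(τ_{S,c}(x))`, for a given inverse
`τSc` of the moment map. -/
def mSc {m : ℕ} (S : Finset (EuclideanSpace ℝ (Fin m)))
    (c : EuclideanSpace ℝ (Fin m) → ℝ)
    (τSc : EuclideanSpace ℝ (Fin m) → EuclideanSpace ℝ (Fin m))
    (α x : EuclideanSpace ℝ (Fin m)) : ℝ :=
  c α * Real.exp ⟪α, τSc x⟫ / chiSc S c (τSc x)

/-!
For `x ∈ P` let `K x` be the compact convex set of probability vectors `w` on `S` with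
barycentre `Σ_α w_α • α = x`, and maximize on it the strictly concave functional
`F w = Σ_α w_α log c(α) - Σ_α w_α log w_α`; call the unique maximizer `g x`. Gibbs' inequality
shows that on the fibre over `μ(τ)` the maximizer is the Gibbs distribution
`c(α) e^{⟨α,τ⟩} / χ(τ)`, so `g = (m_{S,c,α})_α` on `P°`. For continuity of `g` on `P`, let `w'` be a
cluster value of `g y` as `y → x`. It lies in `K x` by closedness, and it maximizes `F` there:
for `v ∈ K x` the points `g y + s • (v - w')`, `0 ≤ s < 1`, lie in `K y` once `y` is close to `x`,
because `v - w'` has total mass zero and barycentre zero. By uniqueness `w' = g x`.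
-/

open Real

section Convex

variable {E ι : Type*} [AddCommGroup E] [Module ℝ E] [Fintype ι]

def convexWeights (β : ι → E) (x : E) : Set (ι → ℝ) :=
  stdSimplex ℝ ι ∩ Fintype.linearCombination ℝ β ⁻¹' {x}

lemma convexWeights_nonempty_iff {β : ι → E} {x : E} :
    (convexWeights β x).Nonempty ↔ x ∈ convexHull ℝ (range β) := by
  classical
  have : convexHull ℝ (range β) = Fintype.linearCombination ℝ β '' stdSimplex ℝ ι := by
    rw [← convexHull_basis_eq_stdSimplex, LinearMap.image_convexHull, ← Set.range_comp]
    congr 2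
    ext i
    simp [Fintype.linearCombination_apply, ite_smul]
  rw [this]
  exact ⟨fun ⟨w, hw, hwx⟩ => ⟨w, hw, hwx⟩, fun ⟨w, hw, hwx⟩ => ⟨w, hw, hwx⟩⟩

lemma convex_convexWeights (β : ι → E) (x : E) : Convex ℝ (convexWeights β x) :=
  (convex_stdSimplex ℝ ι).inter ((convex_singleton x).linear_preimage _)

lemma add_smul_sub_mem_convexWeights {β : ι → E} {x y : E} {w v v' : ι → ℝ} {s : ℝ}
    (hw : w ∈ convexWeights β y) (hv : v ∈ convexWeights β x) (hv' : v' ∈ convexWeights β x)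
    (hnonneg : ∀ i, 0 ≤ w i + s * (v i - v' i)) :
    w + s • (v - v') ∈ convexWeights β y := by
  refine ⟨⟨hnonneg, ?_⟩, ?_⟩
  · simp only [Pi.add_apply, Pi.smul_apply, Pi.sub_apply, smul_eq_mul, Finset.sum_add_distrib,
      ← Finset.mul_sum, Finset.sum_sub_distrib, hw.1.2, hv.1.2, hv'.1.2]
    ring
  · have hwy : Fintype.linearCombination ℝ β w = y := hw.2
    have hvx : Fintype.linearCombination ℝ β v = x := hv.2
    have hv'x : Fintype.linearCombination ℝ β v' = x := hv'.2
    simp [hwy, hvx, hv'x]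

lemma eq_of_isMaxOn_convexWeights {β : ι → E} {x : E} {f : (ι → ℝ) → ℝ}
    (hf : StrictConcaveOn ℝ (stdSimplex ℝ ι) f) {w v : ι → ℝ}
    (hw : w ∈ convexWeights β x) (hv : v ∈ convexWeights β x)
    (hfw : IsMaxOn f (convexWeights β x) w) (hfv : IsMaxOn f (convexWeights β x) v) : w = v :=
  (hf.subset inter_subset_left (convex_convexWeights β x)).eq_of_isMaxOn hfw hfv hw hv

end Convex

section Gibbs

variable {E ι : Type*} [AddCommGroup E] [Module ℝ E] [Fintype ι]

def gibbsFunctional (γ : ι → ℝ) (w : ι → ℝ) : ℝ :=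
  ∑ i, negMulLog (w i) + ∑ i, w i * γ i

lemma continuous_gibbsFunctional (γ : ι → ℝ) : Continuous (gibbsFunctional γ) :=
  (continuous_finsetSum _ fun i _ => continuous_negMulLog.comp (continuous_apply i)).add
    (continuous_finsetSum _ fun i _ => (continuous_apply i).mul continuous_const)

lemma strictConcaveOn_sum_negMulLog :
    StrictConcaveOn ℝ (Ici (0 : ι → ℝ)) fun w => ∑ i, negMulLog (w i) := by
  refine ⟨convex_Ici 0, fun w hw v hv hwv a b ha hb hab => ?_⟩
  obtain ⟨i, hi⟩ := Function.ne_iff.1 hwv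
  simp only [smul_eq_mul, Finset.mul_sum, ← Finset.sum_add_distrib, Pi.add_apply, Pi.smul_apply]
  exact Finset.sum_lt_sum (fun j _ => concaveOn_negMulLog.2 (hw j) (hv j) ha.le hb.le hab)
    ⟨i, Finset.mem_univ i, strictConcaveOn_negMulLog.2 (hw i) (hv i) hi ha hb hab⟩

lemma strictConcaveOn_gibbsFunctional (γ : ι → ℝ) :
    StrictConcaveOn ℝ (stdSimplex ℝ ι) (gibbsFunctional γ) := by
  have hlin : ConcaveOn ℝ (Ici 0) fun w : ι → ℝ => ∑ i, w i * γ i := by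
    have : (fun w : ι → ℝ => ∑ i, w i * γ i) = Fintype.linearCombination ℝ γ := by
      ext w
      simp [Fintype.linearCombination_apply]
    exact this ▸ (Fintype.linearCombination ℝ γ).concaveOn (convex_Ici 0)
  exact (strictConcaveOn_sum_negMulLog.add_concaveOn hlin).subset (fun w hw => hw.1)
    (convex_stdSimplex ℝ ι)

lemma negMulLog_add_mul_log_le {w p : ℝ} (hw : 0 ≤ w) (hp : 0 < p) :
    negMulLog w + w * log p ≤ p - w := by
  rcases hw.eq_or_lt with rfl | hw
  · simpa using hp.le
  calc negMulLog w + w * log p = w * log (p / w) := by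
        rw [log_div hp.ne' hw.ne', negMulLog]; ring
    _ ≤ w * (p / w - 1) := mul_le_mul_of_nonneg_left (log_le_sub_one_of_pos (div_pos hp hw)) hw.le
    _ = p - w := by field_simp

lemma isMaxOn_gibbsFunctional {β : ι → E} {x : E} {γ p : ι → ℝ} (φ : E →ₗ[ℝ] ℝ) (r : ℝ)
    (hp : ∀ i, 0 < p i) (hpx : p ∈ convexWeights β x)
    (hlog : ∀ i, log (p i) = γ i + φ (β i) + r) :
    IsMaxOn (gibbsFunctional γ) (convexWeights β x) p := by
  have key : ∀ w ∈ convexWeights β x, gibbsFunctional γ w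
      = ∑ i, (negMulLog (w i) + w i * log (p i)) - φ x - r := by
    intro w hw
    have hφ : φ x = ∑ i, w i * φ (β i) := by
      rw [← hw.2, Fintype.linearCombination_apply, map_sum]
      simp [map_smul]
    simp only [gibbsFunctional, hlog, mul_add, Finset.sum_add_distrib, hφ, ← Finset.sum_mul, hw.1.2]
    ring
  intro w hw
  simp only [mem_ofPred_eq, key w hw, key p hpx]
  have hp0 : ∑ i, (negMulLog (p i) + p i * log (p i)) = 0 :=
    Finset.sum_eq_zero fun i _ => by simp [negMulLog]
  have hw0 : ∑ i, (negMulLog (w i) + w i * log (p i)) ≤ ∑ i, (p i - w i) :=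
    Finset.sum_le_sum fun i _ => negMulLog_add_mul_log_le (hw.1.1 i) (hp i)
  rw [Finset.sum_sub_distrib, hpx.1.2, hw.1.2, sub_self] at hw0
  linarith

end Gibbs

lemma eventually_nonneg_add_smul_sub {ι α : Type*} [Finite ι] {l : Filter α} {w : α → ι → ℝ}
    {w' v : ι → ℝ} {s : ℝ} (hs₀ : 0 ≤ s) (hs₁ : s < 1) (hv : ∀ i, 0 ≤ v i)
    (hw : ∀ᶠ a in l, ∀ i, 0 ≤ w a i) (hw' : Tendsto w l (𝓝 w')) :
    ∀ᶠ a in l, ∀ i, 0 ≤ w a i + s * (v i - w' i) := by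
  refine eventually_all.2 fun i => ?_
  rcases le_or_gt (w' i) (v i) with h | h
  · exact hw.mono fun a ha => add_nonneg (ha i) (mul_nonneg hs₀ (sub_nonneg.2 h))
  · have hpos : 0 < w' i + s * (v i - w' i) := by nlinarith [hv i]
    have hlim : Tendsto (fun a => w a i + s * (v i - w' i)) l (𝓝 (w' i + s * (v i - w' i))) :=
      (((continuous_apply i).tendsto w').comp hw').add_const _
    exact (hlim.eventually (eventually_gt_nhds hpos)).mono fun a ha => ha.le

lemma isMaxOn_convexWeights_of_tendsto {E ι α : Type*} [AddCommGroup E] [Module ℝ E] [Fintype ι]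
    {l : Filter α} {β : ι → E} {y : α → E} {w : α → ι → ℝ} {x : E} {w' : ι → ℝ}
    [l.NeBot] {f : (ι → ℝ) → ℝ} (hf : Continuous f)
    (hw : ∀ᶠ a in l, w a ∈ convexWeights β (y a))
    (hmax : ∀ᶠ a in l, IsMaxOn f (convexWeights β (y a)) (w a))
    (hw' : Tendsto w l (𝓝 w')) (hw'x : w' ∈ convexWeights β x) :
    IsMaxOn f (convexWeights β x) w' := by
  intro v hv
  have hseg : ∀ s ∈ Ico (0 : ℝ) 1, f (w' + s • (v - w')) ≤ f w' := by
    intro s hs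
    have hnonneg := eventually_nonneg_add_smul_sub hs.1 hs.2 hv.1.1
      (hw.mono fun a ha => ha.1.1) hw'
    have hle : ∀ᶠ a in l, f (w a + s • (v - w')) ≤ f (w a) := by
      filter_upwards [hw, hmax, hnonneg] with a hwa hmaxa hnna
      exact hmaxa (add_smul_sub_mem_convexWeights hwa hv hw'x hnna)
    exact le_of_tendsto_of_tendsto ((hf.tendsto _).comp (hw'.add_const _))
      ((hf.tendsto _).comp hw') hle
  have hlim : Tendsto (fun s : ℝ => f (w' + s • (v - w'))) (𝓝[<] 1) (𝓝 (f v)) := by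
    have hc : Continuous fun s : ℝ => f (w' + s • (v - w')) := by fun_prop
    simpa using (hc.tendsto 1).mono_left nhdsWithin_le_nhds
  exact le_of_tendsto hlim (mem_of_superset (Ioo_mem_nhdsLT zero_lt_one)
    fun s hs => hseg s (Ioo_subset_Ico_self hs))

section Topology

variable {E ι : Type*} [AddCommGroup E] [Module ℝ E] [TopologicalSpace E]
  [IsTopologicalAddGroup E] [ContinuousSMul ℝ E] [Fintype ι]

lemma isCompact_convexWeights [T1Space E] (β : ι → E) (x : E) :
    IsCompact (convexWeights β x) :=
  (isCompact_stdSimplex ℝ ι).inter_right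
    (isClosed_singleton.preimage (LinearMap.continuous_on_pi _))

lemma exists_isMaxOn_convexWeights [T1Space E] {β : ι → E} {x : E} {f : (ι → ℝ) → ℝ}
    (hf : Continuous f) (hx : x ∈ convexHull ℝ (range β)) :
    ∃ w ∈ convexWeights β x, IsMaxOn f (convexWeights β x) w :=
  (isCompact_convexWeights β x).exists_isMaxOn (convexWeights_nonempty_iff.2 hx) hf.continuousOn

variable {α : Type*} {l : Filter α} {β : ι → E} {y : α → E} {w : α → ι → ℝ} {x : E}
  {w' : ι → ℝ}

lemma mem_convexWeights_of_tendsto [T2Space E] [l.NeBot]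
    (hw : ∀ᶠ a in l, w a ∈ convexWeights β (y a)) (hy : Tendsto y l (𝓝 x))
    (hw' : Tendsto w l (𝓝 w')) : w' ∈ convexWeights β x := by
  refine ⟨(isClosed_stdSimplex ℝ ι).mem_of_tendsto hw' (hw.mono fun a ha => ha.1), ?_⟩
  have hL := ((LinearMap.continuous_on_pi (Fintype.linearCombination ℝ β)).tendsto w').comp hw'
  exact tendsto_nhds_unique (hL.congr' (hw.mono fun a ha => ha.2)) hy

theorem continuousOn_of_isMaxOn_convexWeights [T2Space E] {f : (ι → ℝ) → ℝ}
    (hf : Continuous f) (hconc : StrictConcaveOn ℝ (stdSimplex ℝ ι) f) {P : Set E}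
    {g : E → ι → ℝ} (hg : ∀ x ∈ P, g x ∈ convexWeights β x)
    (hgmax : ∀ x ∈ P, IsMaxOn f (convexWeights β x) (g x)) : ContinuousOn g P := by
  intro x hx
  have hP : ∀ᶠ z in 𝓝[P] x, z ∈ P := self_mem_nhdsWithin
  refine (isCompact_stdSimplex ℝ ι).tendsto_nhds_of_unique_mapClusterPt
    (hP.mono fun z hz => (hg z hz).1) fun w' _ hw' => ?_
  obtain ⟨U, hU, hUw'⟩ := mapClusterPt_iff_ultrafilter.1 hw'
  have hUP : ∀ᶠ z in (U : Filter E), z ∈ P := hU hP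
  have hw'x : w' ∈ convexWeights β x := mem_convexWeights_of_tendsto (hUP.mono hg)
    (tendsto_id.mono_left (hU.trans nhdsWithin_le_nhds)) hUw'
  exact eq_of_isMaxOn_convexWeights hconc hw'x (hg x hx)
    (isMaxOn_convexWeights_of_tendsto hf (hUP.mono hg) (hUP.mono hgmax) hUw' hw'x) (hgmax x hx)

end Topology

section MomentMap

variable {m : ℕ} {S : Finset (EuclideanSpace ℝ (Fin m))} {c : EuclideanSpace ℝ (Fin m) → ℝ}

def gibbsWeights (S : Finset (EuclideanSpace ℝ (Fin m))) (c : EuclideanSpace ℝ (Fin m) → ℝ)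
    (τ : EuclideanSpace ℝ (Fin m)) (α : S) : ℝ :=
  c α * exp ⟪(α : EuclideanSpace ℝ (Fin m)), τ⟫ / chiSc S c τ

lemma chiSc_pos (hc : ∀ α ∈ S, 0 < c α) (hS : S.Nonempty) (τ : EuclideanSpace ℝ (Fin m)) :
    0 < chiSc S c τ :=
  Finset.sum_pos (fun α hα => mul_pos (hc α hα) (exp_pos _)) hS

lemma gibbsWeights_pos (hc : ∀ α ∈ S, 0 < c α) (hS : S.Nonempty) (τ : EuclideanSpace ℝ (Fin m))
    (α : S) : 0 < gibbsWeights S c τ α :=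
  div_pos (mul_pos (hc α α.2) (exp_pos _)) (chiSc_pos hc hS τ)

lemma gibbsWeights_mem_convexWeights (hc : ∀ α ∈ S, 0 < c α) (hS : S.Nonempty)
    (τ : EuclideanSpace ℝ (Fin m)) :
    gibbsWeights S c τ ∈ convexWeights (↑) (muSc S c τ) := by
  refine ⟨⟨fun α => (gibbsWeights_pos hc hS τ α).le, ?_⟩, ?_⟩
  · simp only [gibbsWeights]
    rw [Finset.sum_coe_sort S fun α => c α * exp ⟪α, τ⟫ / chiSc S c τ, ← Finset.sum_div]
    exact div_self (chiSc_pos hc hS τ).ne'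
  · show Fintype.linearCombination ℝ _ _ = _
    rw [Fintype.linearCombination_apply, muSc, Finset.smul_sum,
      ← Finset.sum_coe_sort S fun α => (chiSc S c τ)⁻¹ • (c α * exp ⟪α, τ⟫) • α]
    simp only [gibbsWeights, smul_smul, div_eq_inv_mul]

lemma isMaxOn_gibbsWeights (hc : ∀ α ∈ S, 0 < c α) (hS : S.Nonempty)
    (τ : EuclideanSpace ℝ (Fin m)) :
    IsMaxOn (gibbsFunctional fun α : S => log (c α)) (convexWeights (↑) (muSc S c τ))
      (gibbsWeights S c τ) := by
  refine isMaxOn_gibbsFunctional (innerₗ _ τ) (-log (chiSc S c τ)) (gibbsWeights_pos hc hS τ)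
    (gibbsWeights_mem_convexWeights hc hS τ) fun α => ?_
  rw [gibbsWeights, log_div (mul_pos (hc α α.2) (exp_pos _)).ne' (chiSc_pos hc hS τ).ne',
    log_mul (hc α α.2).ne' (exp_pos _).ne', log_exp, innerₗ_apply_apply, real_inner_comm]
  ring

lemma eq_gibbsWeights_of_isMaxOn (hc : ∀ α ∈ S, 0 < c α) (hS : S.Nonempty)
    {τ x : EuclideanSpace ℝ (Fin m)} (hx : muSc S c τ = x) {w : S → ℝ}
    (hw : w ∈ convexWeights (↑) x)
    (hmax : IsMaxOn (gibbsFunctional fun α : S => log (c α)) (convexWeights (↑) x) w) :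
    w = gibbsWeights S c τ := by
  subst hx
  exact eq_of_isMaxOn_convexWeights (strictConcaveOn_gibbsFunctional _) hw
    (gibbsWeights_mem_convexWeights hc hS τ) hmax (isMaxOn_gibbsWeights hc hS τ)

end MomentMap

theorem mSc_extends_continuously_general
    {m : ℕ} (S : Finset (EuclideanSpace ℝ (Fin m)))
    (c : EuclideanSpace ℝ (Fin m) → ℝ) (hc : ∀ α ∈ S, 0 < c α)
    (P : Set (EuclideanSpace ℝ (Fin m)))
    (hP : P = convexHull ℝ (S : Set (EuclideanSpace ℝ (Fin m))))
    (τSc : EuclideanSpace ℝ (Fin m) → EuclideanSpace ℝ (Fin m))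
    (hτ₂ : ∀ x ∈ interior P, muSc S c (τSc x) = x) :
    ∃ M : EuclideanSpace ℝ (Fin m) → EuclideanSpace ℝ (Fin m) → ℝ,
      (∀ α ∈ S, ContinuousOn (M α) P) ∧
      (∀ α ∈ S, ∀ x ∈ interior P, M α x = mSc S c τSc α x) ∧
      (∀ x ∈ P, ∑ α ∈ S, M α x = 1) ∧
      (∀ x ∈ P, ∑ α ∈ S, M α x • α = x) := by
  subst hP
  have hmax : ∀ x ∈ convexHull ℝ (S : Set (EuclideanSpace ℝ (Fin m))), ∃ w ∈ convexWeights (↑) x,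
      IsMaxOn (gibbsFunctional fun α : S => log (c α)) (convexWeights (↑) x) w := fun x hx =>
    exists_isMaxOn_convexWeights (continuous_gibbsFunctional _)
      (by rwa [Subtype.range_coe_subtype])
  choose! g hg hgmax using hmax
  have hg_int : ∀ x ∈ interior (convexHull ℝ (S : Set (EuclideanSpace ℝ (Fin m)))),
      g x = gibbsWeights S c (τSc x) := fun x hx =>
    have hS : S.Nonempty := by simpa using convexHull_nonempty_iff.1 ⟨x, interior_subset hx⟩
    eq_gibbsWeights_of_isMaxOn hc hS (hτ₂ x hx) (hg x (interior_subset hx))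
      (hgmax x (interior_subset hx))
  have hgcont := continuousOn_of_isMaxOn_convexWeights (continuous_gibbsFunctional _)
    (strictConcaveOn_gibbsFunctional _) hg hgmax
  refine ⟨fun α x => if h : α ∈ S then g x ⟨α, h⟩ else 0, fun α hα => ?_,
    fun α hα x hx => ?_, fun x hx => ?_, fun x hx => ?_⟩
  · simp only [dif_pos hα]
    exact (continuous_apply _).comp_continuousOn hgcont
  · simp only [dif_pos hα, hg_int x hx]
    rfl
  · rw [Finset.sum_dite_of_true fun _ h => h]
    exact (hg x hx).1.2
  · simp only [dite_smul, zero_smul]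
    rw [Finset.sum_dite_of_true fun _ h => h]
    exact (hg x hx).2

/-- The functions `m_{S,c,α}` extend continuously from `P°` to `P`, and the
extensions satisfy `Σ_α m_{S,c,α}(x) = 1` and `Σ_α m_{S,c,α}(x)·α = x` on all of `P`. -/
theorem mSc_extends_continuously
    {m : ℕ} (S : Finset (EuclideanSpace ℝ (Fin m)))
    (c : EuclideanSpace ℝ (Fin m) → ℝ) (hc : ∀ α ∈ S, 0 < c α)
    (P : Set (EuclideanSpace ℝ (Fin m)))
    (hP : P = convexHull ℝ (S : Set (EuclideanSpace ℝ (Fin m))))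
    (hPo : (interior P).Nonempty)
    (τSc : EuclideanSpace ℝ (Fin m) → EuclideanSpace ℝ (Fin m))
    (hτ₁ : ∀ τ, τSc (muSc S c τ) = τ)
    (hτ₂ : ∀ x ∈ interior P, muSc S c (τSc x) = x) :
    ∃ M : EuclideanSpace ℝ (Fin m) → EuclideanSpace ℝ (Fin m) → ℝ,
      (∀ α ∈ S, ContinuousOn (M α) P) ∧
      (∀ α ∈ S, ∀ x ∈ interior P, M α x = mSc S c τSc α x) ∧
      (∀ x ∈ P, ∑ α ∈ S, M α x = 1) ∧
      (∀ x ∈ P, ∑ α ∈ S, M α x • α = x) :=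
  mSc_extends_continuously_general S c hc P hP τSc hτ₂
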